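/- arXiv:2405.05592 — 4 statements merged into one kernel-verified Lean document; each statement's English description precedes it below -/
import Mathlib

section
/- (Multiplicative decomposition of the exponential sum.) With D := det(2M_F), let q = q₁q₂ where gcd(q₁, 2LD) = 1 and every prime factor of q₂ divides 2LD. Then for every c ∈ ℤ^{n+1}: S_{q,L,λ}(c) = S⁽¹⁾_{q,L,λ}(c) · S⁽²⁾_{q,L,λ}(c). -/
open scoped BigOperators
open Finset Filter Topology Matrix

noncomputable section

namespace Quad

/-- The integral quadratic form `x ↦ xᵀ M_F x` where `N = 2·M_F` is an integer
symmetric matrix with even diagonal, so that the value `(xᵀ N x)/2` is an integer. -/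
def Fint {m : ℕ} (N : Matrix (Fin m) (Fin m) ℤ) (x : Fin m → ℤ) : ℤ :=
  (∑ i, ∑ j, N i j * x i * x j) / 2

/-- The corresponding real quadratic form `x ↦ xᵀ M_F x`, `N = 2·M_F`. -/
def FR {m : ℕ} (N : Matrix (Fin m) (Fin m) ℤ) (x : Fin m → ℝ) : ℝ :=
  (∑ i, ∑ j, (N i j : ℝ) * x i * x j) / 2

/-- The real quadratic form attached to a real matrix. -/
def QFR {m : ℕ} (A : Matrix (Fin m) (Fin m) ℝ) (x : Fin m → ℝ) : ℝ :=
  ∑ i, ∑ j, A i j * x i * x j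

/-- The gradient `∇F(x) = 2 M_F x = N x`. -/
def grad {m : ℕ} (N : Matrix (Fin m) (Fin m) ℤ) (x : Fin m → ℤ) : Fin m → ℤ :=
  fun i => ∑ j, N i j * x j

/-- `H_{λ,L}(y) = F(λ)/L + ∇F(λ)·y` (assuming `L ∣ F(λ)`). -/
def Hpoly {m : ℕ} (N : Matrix (Fin m) (Fin m) ℤ) (L : ℕ) (lam y : Fin m → ℤ) : ℤ :=
  Fint N lam / (L : ℤ) + ∑ i, grad N lam i * y i

/-- The additive character `e_q(t) = exp(2πit/q)`. -/
def eChar (q : ℕ) (t : ℝ) : ℂ := Complex.exp (2 * Real.pi * Complex.I * (t : ℂ) / (q : ℂ))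

/-- The dual form value `N_F(c) = cᵀ · adj(N) · c`, `N = 2 M_F`; this equals `2ⁿ F*(c)`. -/
def dualF {m : ℕ} (N : Matrix (Fin m) (Fin m) ℤ) (c : Fin m → ℤ) : ℤ :=
  ∑ i, ∑ j, N.adjugate i j * c i * c j

/-- The embedding sending the `i`-th of the `n-1` variables of `F₂` to coordinate `i+2`. -/
def emb {n : ℕ} (i : Fin (n-1)) : Fin (n+1) := ⟨i.val + 2, by have h := i.isLt; omega⟩

/-- The quadratic Gauss sum `ι_q = Σ_{x mod q} e_q(x²)`. -/
def iotaSum (q : ℕ) : ℂ := ∑ x ∈ Finset.range q, eChar q ((x : ℝ)^2)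

open Classical in
/-- The exponential sum `S_{q,L,λ}(c)`. -/
def Sq (n : ℕ) (N : Matrix (Fin (n+1)) (Fin (n+1)) ℤ) (q L : ℕ)
    (lam c : Fin (n+1) → ℤ) : ℂ :=
  ∑ a ∈ (Finset.range q).filter (fun a => Nat.gcd a q = 1),
    ∑ σ ∈ (Finset.univ : Finset (Fin (n+1) → Fin (q*L))).filter
        (fun σ => (L : ℤ) ∣ Hpoly N L lam (fun i => ((σ i : ℕ) : ℤ))),
      eChar (q*L)
        (((a : ℤ) * (Hpoly N L lam (fun i => ((σ i : ℕ) : ℤ))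
            + (L : ℤ) * Fint N (fun i => ((σ i : ℕ) : ℤ)))
          + ∑ i, c i * ((σ i : ℕ) : ℤ) : ℤ) : ℝ)

/-- The good-modulus factor `S⁽¹⁾_{q,L,λ}(c)` (for `q = q₁q₂`, `gcd(q₁,2LD) = 1`). -/
def S1 (n : ℕ) (N : Matrix (Fin (n+1)) (Fin (n+1)) ℤ) (q₁ q₂ L : ℕ) (k₁ : ℤ)
    (lam c : Fin (n+1) → ℤ) : ℂ :=
  ∑ σ : Fin (n+1) → Fin q₁,
    ∑ a ∈ (Finset.range q₁).filter (fun a => Nat.gcd a q₁ = 1),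
      eChar q₁
        (((a : ℤ) * (((q₂ : ℤ) * (L : ℤ))^2 * Fint N (fun i => ((σ i : ℕ) : ℤ))
              + (q₂ : ℤ) * ((∑ i, grad N lam i * ((σ i : ℕ) : ℤ)) + k₁))
          + ∑ i, c i * ((σ i : ℕ) : ℤ) : ℤ) : ℝ)

open Classical in
/-- The bad-modulus factor `S⁽²⁾_{q,L,λ}(c)`. -/
def S2 (n : ℕ) (N : Matrix (Fin (n+1)) (Fin (n+1)) ℤ) (q₁ q₂ L : ℕ) (k₂ : ℤ)
    (lam c : Fin (n+1) → ℤ) : ℂ :=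
  ∑ σ ∈ (Finset.univ : Finset (Fin (n+1) → Fin (q₂*L))).filter
      (fun σ => (L : ℤ) ∣ Hpoly N L lam (fun i => (q₁ : ℤ) * ((σ i : ℕ) : ℤ))),
    ∑ a ∈ (Finset.range q₂).filter (fun a => Nat.gcd a q₂ = 1),
      eChar (q₂*L)
        (((a : ℤ) * ((q₁ : ℤ)^2 * (L : ℤ) * Fint N (fun i => ((σ i : ℕ) : ℤ))
              + (q₁ : ℤ) * ((∑ i, grad N lam i * ((σ i : ℕ) : ℤ)) + k₂))
          + ∑ i, c i * ((σ i : ℕ) : ℤ) : ℤ) : ℝ)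

/-- The complete quadratic exponential sum `T_q(G,m;c)`. -/
def Tq (n : ℕ) (NG : Matrix (Fin (n+1)) (Fin (n+1)) ℤ) (q : ℕ) (m : ℤ)
    (c : Fin (n+1) → ℤ) : ℂ :=
  ∑ a ∈ (Finset.range q).filter (fun a => Nat.gcd a q = 1),
    ∑ b : Fin (n+1) → Fin q,
      eChar q (((a : ℤ) * (Fint NG (fun i => ((b i : ℕ) : ℤ)) - m)
        + ∑ i, c i * ((b i : ℕ) : ℤ) : ℤ) : ℝ)

/-- The counting function whose normalised limit is the local density
`σ_p(W;L,λ)`: the number of `v ∈ (ℤ/p^kℤ)^{n+1}` with `F(v) ≡ 0 mod p^k` and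
`v ≡ λ mod p^{ord_p L}`. -/
def localCount (n : ℕ) (N : Matrix (Fin (n+1)) (Fin (n+1)) ℤ) (L : ℕ)
    (lam : Fin (n+1) → ℤ) (p k : ℕ) : ℕ :=
  Nat.card {v : Fin (n+1) → Fin (p^k) //
    ((p : ℤ)^k ∣ Fint N (fun i => ((v i : ℕ) : ℤ))) ∧
    ∀ i, (p : ℤ)^(padicValNat p L) ∣ ((v i : ℕ) : ℤ) - lam i}

/-- The coordinates `t(x) = Mx` of an integer vector. -/
def tmap (n : ℕ) (M : Matrix (Fin (n+1)) (Fin (n+1)) ℝ) (x : Fin (n+1) → ℤ) :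
    Fin (n+1) → ℝ :=
  M.mulVec (fun i => (x i : ℝ))

/-- The counting function `N_W((R,ξ),(L,Γ);B)` for the affine cone. -/
def NW (n : ℕ) (N : Matrix (Fin (n+1)) (Fin (n+1)) ℤ)
    (M : Matrix (Fin (n+1)) (Fin (n+1)) ℝ) (a b : Fin (n+1) → ℝ)
    (B R : ℝ) (L : ℕ) (Γ : Fin (n+1) → ℤ) : ℕ :=
  Nat.card {x : Fin (n+1) → ℤ //
    x ≠ 0 ∧ Fint N x = 0 ∧ (∀ i, (L : ℤ) ∣ x i - Γ i) ∧
    tmap n M x 0 ≠ 0 ∧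
    (∀ j : Fin (n+1), 2 ≤ j.val →
      a j ≤ R * (tmap n M x j / tmap n M x 0) ∧ R * (tmap n M x j / tmap n M x 0) ≤ b j) ∧
    (∀ i, |tmap n M x i| ≤ B)}

/-- Twice the counting function `N_V((R,ξ),(L,Λ);B)` for the projective quadric:
the number of primitive integer vectors on the cone, in the real zoom region,
of height at most `B`, congruent mod `L` to a unit multiple of `Γ`. -/
def NV (n : ℕ) (N : Matrix (Fin (n+1)) (Fin (n+1)) ℤ)
    (M : Matrix (Fin (n+1)) (Fin (n+1)) ℝ) (a b : Fin (n+1) → ℝ)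
    (B R : ℝ) (L : ℕ) (Γ : Fin (n+1) → ℤ) : ℕ :=
  Nat.card {x : Fin (n+1) → ℤ //
    Finset.univ.gcd x = 1 ∧ Fint N x = 0 ∧
    tmap n M x 0 ≠ 0 ∧
    (∀ j : Fin (n+1), 2 ≤ j.val →
      a j ≤ R * (tmap n M x j / tmap n M x 0) ∧ R * (tmap n M x j / tmap n M x 0) ≤ b j) ∧
    (∀ i, |tmap n M x i| ≤ B) ∧
    (∃ γ : (ZMod L)ˣ, ∀ i, ((x i : ZMod L)) = (γ : ZMod L) * ((Γ i : ZMod L)))}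

/-- The value of the singular integral `I_R` for `R ≥ R₀`. -/
def IRval (n : ℕ) (M : Matrix (Fin (n+1)) (Fin (n+1)) ℝ) (a b : Fin (n+1) → ℝ)
    (R : ℝ) : ℝ :=
  2 * (∏ j ∈ Finset.univ.filter (fun j : Fin (n+1) => 2 ≤ j.val), (b j - a j))
    / (((n : ℝ) - 1) * |M.det| * R^(n-1))

/-- The error exponent factor `E_τ(B)`. -/
def Etau (n : ℕ) (τ B : ℝ) : ℝ :=
  if 5 ≤ n then B ^ (-(((n : ℝ) - 3) * τ / (5 * (n : ℝ) - 7)))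
  else B ^ (-(2 * τ / 17))

/-- The error factor `E_τ(1;B)` from the upper-bound range `-1 < τ < 1`. -/
def Etau1 (n : ℕ) (τ B : ℝ) : ℝ :=
  if 5 ≤ n then B ^ (-(((n : ℝ) - 3) * τ / 2))
  else B ^ (-τ) + B ^ (-((1 + τ)/4))

end Quad

/-!
Since `gcd(q₁, q₂L) = 1`, the Chinese remainder theorem parametrises the units `a` modulo
`q₁q₂` as `q₂a₁ + q₁a₂` and the residues `σ` modulo `q₁q₂L` as `q₂Lσ₁ + q₁σ₂`, with `a₁, σ₁`
taken modulo `q₁` and `a₂, σ₂` modulo `q₂`, `q₂L`. Expanding `F(σ)` and using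
`k ≡ k₁q₂L (mod q₁)`, `k ≡ k₂q₁ (mod q₂L)`, the phase `a(H_{λ,L}(σ) + L F(σ)) + c·σ` becomes
congruent modulo `q₁q₂L` to `q₂L E₁ + q₁ E₂`, where `E₁`, `E₂` are the phases of `S⁽¹⁾` and
`S⁽²⁾`; hence every term of `S_{q,L,λ}(c)` splits as a product.
-/

theorem Nat.modEq_of_mul_add_mul_modEq {m₁ m₂ x₁ y₁ x₂ y₂ : ℕ} (h : m₁.Coprime m₂)
    (hxy : m₂ * x₁ + m₁ * x₂ ≡ m₂ * y₁ + m₁ * y₂ [MOD m₁ * m₂]) : x₁ ≡ y₁ [MOD m₁] := by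
  have h₁ : m₂ * x₁ ≡ m₂ * y₁ [MOD m₁] := by
    simpa [Nat.ModEq, Nat.add_mul_mod_self_left] using hxy.of_mul_right m₂
  exact h₁.cancel_left_of_coprime h

theorem Nat.coprime_of_isCoprime_of_prime_dvd {a b : ℕ} {D : ℤ} (ha : IsCoprime (a : ℤ) D)
    (hb : ∀ p : ℕ, p.Prime → p ∣ b → (p : ℤ) ∣ D) : a.Coprime b :=
  Nat.coprime_of_dvd fun p hp hpa hpb => hp.ne_one <| Nat.isUnit_iff.1 <| Int.ofNat_isUnit.1 <|
    ha.isUnit_of_dvd' (Int.natCast_dvd_natCast.2 hpa) (hb p hp hpb)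

theorem dotProduct_modEq_dotProduct {ι : Type*} [Fintype ι] {d : ℤ} (v : ι → ℤ) {x y : ι → ℤ}
    (h : ∀ i, x i ≡ y i [ZMOD d]) : v ⬝ᵥ x ≡ v ⬝ᵥ y [ZMOD d] :=
  Int.ModEq.sum fun i _ => (h i).mul_left _

theorem Matrix.IsSymm.exists_eq_add_transpose {ι : Type*} [LinearOrder ι] {N : Matrix ι ι ℤ}
    (hNsym : N.IsSymm) (hNeven : ∀ i, Even (N i i)) : ∃ U : Matrix ι ι ℤ, N = U + Uᵀ := by
  refine ⟨Matrix.of fun i j => if i < j then N i j else if i = j then N i i / 2 else 0, ?_⟩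
  ext i j
  simp only [Matrix.add_apply, Matrix.transpose_apply, Matrix.of_apply]
  rcases lt_trichotomy i j with h | rfl | h
  · simp [h, h.not_gt, h.ne']
  · obtain ⟨r, hr⟩ := hNeven i
    simp only [lt_irrefl, if_false, if_true, hr]
    omega
  · simp [h, h.not_gt, h.ne', hNsym.apply]

section ChineseRemainder

variable {m₁ m₂ : ℕ} [NeZero m₁] [NeZero m₂]

def finProdFinCrtEquiv (h : m₁.Coprime m₂) : Fin m₁ × Fin m₂ ≃ Fin (m₁ * m₂) :=
  Equiv.ofBijective
    (fun x => ⟨(m₂ * x.1 + m₁ * x.2) % (m₁ * m₂), Nat.mod_lt _ (NeZero.pos _)⟩) <|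
    (Fintype.bijective_iff_injective_and_card _).2 ⟨fun x y hxy => by
      have hxy : m₂ * x.1 + m₁ * x.2 ≡ m₂ * y.1 + m₁ * y.2 [MOD m₁ * m₂] := Fin.mk.inj hxy
      have hyx : m₁ * x.2 + m₂ * x.1 ≡ m₁ * y.2 + m₂ * y.1 [MOD m₂ * m₁] := by
        simpa only [add_comm, mul_comm m₁ m₂] using hxy
      exact Prod.ext (Fin.ext ((Nat.modEq_of_mul_add_mul_modEq h hxy).eq_of_lt_of_lt x.1.2 y.1.2))
        (Fin.ext ((Nat.modEq_of_mul_add_mul_modEq h.symm hyx).eq_of_lt_of_lt x.2.2 y.2.2)),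
      by simp⟩

theorem finProdFinCrtEquiv_apply_modEq (h : m₁.Coprime m₂) (x : Fin m₁ × Fin m₂) :
    (finProdFinCrtEquiv h x : ℕ) ≡ m₂ * x.1 + m₁ * x.2 [MOD m₁ * m₂] :=
  Nat.mod_modEq _ _

variable {M : Type*} [AddCommMonoid M]

theorem sum_fin_pi_mul_eq_sum_sum {ι : Type*} [Fintype ι] [DecidableEq ι] (h : m₁.Coprime m₂)
    (f : (ι → ℕ) → M) (hf : ∀ x y, (∀ i, x i ≡ y i [MOD m₁ * m₂]) → f x = f y) :
    ∑ σ : ι → Fin (m₁ * m₂), f (fun i => σ i)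
      = ∑ σ₁ : ι → Fin m₁, ∑ σ₂ : ι → Fin m₂, f (fun i => m₂ * σ₁ i + m₁ * σ₂ i) := by
  let e := (Equiv.arrowProdEquivProdArrow ι (fun _ => Fin m₁) (fun _ => Fin m₂)).symm.trans
    (Equiv.piCongrRight fun _ => finProdFinCrtEquiv h)
  rw [← Fintype.sum_prod_type']
  refine (Fintype.sum_equiv e _ _ fun σ => hf _ _ fun i => ?_).symm
  exact (finProdFinCrtEquiv_apply_modEq h (σ.1 i, σ.2 i)).symm

theorem sum_coprime_range_mul_eq_sum_sum (h : m₁.Coprime m₂)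
    (g : ℕ → M) (hg : ∀ x y, x ≡ y [MOD m₁ * m₂] → g x = g y) :
    ∑ a ∈ (range (m₁ * m₂)).filter (fun a => a.gcd (m₁ * m₂) = 1), g a
      = ∑ a₁ ∈ (range m₁).filter (fun a => a.gcd m₁ = 1),
          ∑ a₂ ∈ (range m₂).filter (fun a => a.gcd m₂ = 1), g (m₂ * a₁ + m₁ * a₂) := by
  have hcop (x₁ x₂ : ℕ) :
      (m₂ * x₁ + m₁ * x₂).Coprime (m₁ * m₂) ↔ x₁.Coprime m₁ ∧ x₂.Coprime m₂ := by
    rw [Nat.coprime_mul_iff_right, add_comm, Nat.coprime_add_mul_left_left,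
      Nat.coprime_mul_iff_left, add_comm, Nat.coprime_add_mul_left_left, Nat.coprime_mul_iff_left,
      and_iff_right h.symm, and_iff_right h]
  simp only [sum_filter, sum_range, ite_sum_zero, ← ite_and]
  rw [← Fintype.sum_prod_type']
  refine (Fintype.sum_equiv (finProdFinCrtEquiv h) _ _ fun x => ?_).symm
  have hx := finProdFinCrtEquiv_apply_modEq h x
  refine if_congr ?_ (hg _ _ hx.symm) rfl
  rw [hx.gcd_eq]
  exact (hcop _ _).symm

end ChineseRemainder

namespace Quad

theorem eChar_add (q : ℕ) (s t : ℝ) : eChar q (s + t) = eChar q s * eChar q t := by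
  simp only [eChar, ← Complex.exp_add]
  congr 1
  push_cast
  ring

theorem eChar_intCast_eq_of_modEq {q : ℕ} {s t : ℤ} (h : s ≡ t [ZMOD q]) :
    eChar q (s : ℝ) = eChar q (t : ℝ) := by
  rcases eq_or_ne q 0 with rfl | hq
  · rw [Int.modEq_zero_iff.1 h]
  obtain ⟨u, hu⟩ := Int.modEq_iff_dvd.1 h
  have hperiod : eChar q ((q * u : ℤ) : ℝ) = 1 := by
    rw [eChar, ← Complex.exp_int_mul_two_pi_mul_I u]
    congr 1
    push_cast
    field_simp
  rw [show t = s + q * u by linarith, Int.cast_add, eChar_add, hperiod, mul_one]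

theorem eChar_mul_mul {m : ℕ} (hm : m ≠ 0) (q : ℕ) (t : ℝ) :
    eChar (m * q) (m * t) = eChar q t := by
  simp only [eChar]
  congr 1
  push_cast
  rw [show 2 * Real.pi * Complex.I * (m * t) = m * (2 * Real.pi * Complex.I * t) by ring,
    mul_div_mul_left _ _ (Nat.cast_ne_zero.2 hm)]

section QuadraticForm

variable {m : ℕ} {N : Matrix (Fin m) (Fin m) ℤ}

theorem Fint_eq_dotProduct_mulVec {U : Matrix (Fin m) (Fin m) ℤ} (hU : N = U + Uᵀ)
    (x : Fin m → ℤ) : Fint N x = x ⬝ᵥ U *ᵥ x := by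
  have h : ∑ i, ∑ j, N i j * x i * x j = 2 * (x ⬝ᵥ U *ᵥ x) :=
    calc ∑ i, ∑ j, N i j * x i * x j = x ⬝ᵥ N *ᵥ x := by
          simp [dotProduct, mulVec, Finset.mul_sum, mul_comm, mul_left_comm]
      _ = 2 * (x ⬝ᵥ U *ᵥ x) := by
          rw [hU, add_mulVec, dotProduct_add, dotProduct_transpose_mulVec, two_mul]
  rw [Fint, h, Int.mul_ediv_cancel_left _ two_ne_zero]

variable (hNsym : N.IsSymm) (hNeven : ∀ i, Even (N i i))
include hNsym hNeven

theorem Fint_add (x y : Fin m → ℤ) :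
    Fint N (x + y) = Fint N x + Fint N y + x ⬝ᵥ N *ᵥ y := by
  obtain ⟨U, rfl⟩ := hNsym.exists_eq_add_transpose hNeven
  simp only [Fint_eq_dotProduct_mulVec rfl, add_mulVec, mulVec_add, dotProduct_add,
    add_dotProduct, dotProduct_transpose_mulVec]
  ring

theorem Fint_smul (t : ℤ) (x : Fin m → ℤ) : Fint N (t • x) = t ^ 2 * Fint N x := by
  obtain ⟨U, rfl⟩ := hNsym.exists_eq_add_transpose hNeven
  simp only [Fint_eq_dotProduct_mulVec rfl, mulVec_smul, smul_dotProduct, dotProduct_smul,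
    smul_eq_mul]
  ring

theorem Fint_modEq {d : ℤ} {x y : Fin m → ℤ} (h : ∀ i, x i ≡ y i [ZMOD d]) :
    Fint N x ≡ Fint N y [ZMOD d] := by
  choose e he using fun i => (h i).symm.dvd
  have hx : x = y + d • e := funext fun i => by
    simp only [Pi.add_apply, Pi.smul_apply, smul_eq_mul]
    linarith [he i]
  rw [hx, Fint_add hNsym hNeven, Fint_smul hNsym hNeven, mulVec_smul, dotProduct_smul,
    smul_eq_mul]
  exact Int.modEq_iff_dvd.2 ⟨-(d * Fint N e + y ⬝ᵥ N *ᵥ e), by ring⟩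

theorem phase_crt_modEq {q₁ q₂ L : ℕ} (hq₁L : IsCoprime (q₁ : ℤ) L) {k k₁ k₂ : ℤ}
    (hk₁ : (q₁ : ℤ) ∣ k - k₁ * q₂ * L) (hk₂ : ((q₂ : ℤ) * L) ∣ k - k₂ * q₁)
    (a₁ a₂ : ℤ) (g c σ₁ σ₂ σ : Fin m → ℤ) (hσ : σ = ((q₂ : ℤ) * L) • σ₁ + (q₁ : ℤ) • σ₂)
    (hH : (L : ℤ) ∣ k + g ⬝ᵥ ((q₁ : ℤ) • σ₂)) :
    (q₂ * a₁ + q₁ * a₂) * (k + g ⬝ᵥ σ + L * Fint N σ) + c ⬝ᵥ σ ≡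
      q₂ * L * (a₁ * ((q₂ * L) ^ 2 * Fint N σ₁ + q₂ * (g ⬝ᵥ σ₁ + k₁)) + c ⬝ᵥ σ₁)
        + q₁ * (a₂ * (q₁ ^ 2 * L * Fint N σ₂ + q₁ * (g ⬝ᵥ σ₂ + k₂)) + c ⬝ᵥ σ₂)
      [ZMOD q₁ * q₂ * L] := by
  subst hσ
  have hF : Fint N (((q₂ : ℤ) * L) • σ₁ + (q₁ : ℤ) • σ₂) = (q₂ * L) ^ 2 * Fint N σ₁
      + q₁ ^ 2 * Fint N σ₂ + q₂ * L * q₁ * (σ₁ ⬝ᵥ N *ᵥ σ₂) := by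
    rw [Fint_add hNsym hNeven, Fint_smul hNsym hNeven, Fint_smul hNsym hNeven, mulVec_smul,
      smul_dotProduct, dotProduct_smul, smul_eq_mul, smul_eq_mul]
    ring
  simp only [dotProduct_add, dotProduct_smul, smul_eq_mul, hF] at hH ⊢
  -- With this and `hk₂`, the phase difference is `a₁q₂` times a multiple of `q₁L` plus
  -- `a₂q₁` times a multiple of `q₂L`.
  obtain ⟨d₁, hd₁⟩ : (q₁ * L : ℤ) ∣ k - k₁ * q₂ * L + q₁ * (g ⬝ᵥ σ₂) :=
    hq₁L.mul_dvd (dvd_add hk₁ (dvd_mul_right _ _))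
      (by simpa [sub_add_eq_add_sub] using dvd_sub hH (dvd_mul_left (L : ℤ) (k₁ * q₂)))
  obtain ⟨d₂, hd₂⟩ := hk₂
  refine Int.modEq_iff_dvd.2 ⟨-(a₁ * (d₁ + q₁ * Fint N σ₂ + q₂ * L * (σ₁ ⬝ᵥ N *ᵥ σ₂)) +
    a₂ * (d₂ + g ⬝ᵥ σ₁ + L * q₂ * L * Fint N σ₁ + L * q₁ * (σ₁ ⬝ᵥ N *ᵥ σ₂))), ?_⟩
  linear_combination (-(a₁ * q₂)) * hd₁ - (a₂ * q₁) * hd₂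

end QuadraticForm

/-- The summand of `Sq`, with the condition `L ∣ H_{λ,L}(σ)` turned into an indicator;
`Q` is the modulus `qL`. -/
def sqTerm {m : ℕ} (N : Matrix (Fin m) (Fin m) ℤ) (L Q : ℕ) (lam c : Fin m → ℤ)
    (a : ℤ) (σ : Fin m → ℤ) : ℂ :=
  if (L : ℤ) ∣ Hpoly N L lam σ then
    eChar Q ((a * (Hpoly N L lam σ + L * Fint N σ) + c ⬝ᵥ σ : ℤ) : ℝ)
  else 0

section ExponentialSum

variable {m : ℕ} {N : Matrix (Fin m) (Fin m) ℤ} {L : ℕ} {lam c : Fin m → ℤ}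

theorem Hpoly_eq (y : Fin m → ℤ) : Hpoly N L lam y = Fint N lam / L + grad N lam ⬝ᵥ y := rfl

theorem sqTerm_congr_left (q : ℕ) {a a' : ℤ} (h : a ≡ a' [ZMOD q]) (σ : Fin m → ℤ) :
    sqTerm N L (q * L) lam c a σ = sqTerm N L (q * L) lam c a' σ := by
  unfold sqTerm
  split_ifs with hH
  · obtain ⟨Y, hY⟩ := dvd_add hH (dvd_mul_right (L : ℤ) (Fint N σ))
    refine eChar_intCast_eq_of_modEq ?_
    rw [hY, Nat.cast_mul, ← mul_assoc, ← mul_assoc]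
    exact ((h.mul_right' (c := (L : ℤ))).mul_right Y).add_right _
  · rfl

theorem sqTerm_congr_right (hNsym : N.IsSymm) (hNeven : ∀ i, Even (N i i)) {Q : ℕ}
    (hLQ : L ∣ Q) (a : ℤ) {σ σ' : Fin m → ℤ} (h : ∀ i, σ i ≡ σ' i [ZMOD Q]) :
    sqTerm N L Q lam c a σ = sqTerm N L Q lam c a σ' := by
  have hH : Hpoly N L lam σ ≡ Hpoly N L lam σ' [ZMOD Q] :=
    (dotProduct_modEq_dotProduct (grad N lam) h).add_left _
  unfold sqTerm
  refine if_congr (hH.of_dvd (Int.natCast_dvd_natCast.2 hLQ)).dvd_iff ?_ rfl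
  exact eChar_intCast_eq_of_modEq <| ((hH.add ((Fint_modEq hNsym hNeven h).mul_left _)).mul_left
    _).add (dotProduct_modEq_dotProduct c h)

theorem sqTerm_crt (hNsym : N.IsSymm) (hNeven : ∀ i, Even (N i i)) {q₁ q₂ : ℕ} (hq₁ : q₁ ≠ 0)
    (hq₂L : q₂ * L ≠ 0) (hq₁L : IsCoprime (q₁ : ℤ) L) {k₁ k₂ : ℤ}
    (hk₁ : (q₁ : ℤ) ∣ Fint N lam / L - k₁ * q₂ * L)
    (hk₂ : ((q₂ : ℤ) * L) ∣ Fint N lam / L - k₂ * q₁) (a₁ a₂ : ℤ) (σ₁ σ₂ : Fin m → ℤ) :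
    sqTerm N L (q₁ * q₂ * L) lam c (q₂ * a₁ + q₁ * a₂) (fun i => q₂ * L * σ₁ i + q₁ * σ₂ i) =
      if (L : ℤ) ∣ Hpoly N L lam (fun i => q₁ * σ₂ i) then
        eChar q₁ ((a₁ * ((q₂ * L) ^ 2 * Fint N σ₁ + q₂ * (grad N lam ⬝ᵥ σ₁ + k₁))
          + c ⬝ᵥ σ₁ : ℤ) : ℝ) *
        eChar (q₂ * L) ((a₂ * (q₁ ^ 2 * L * Fint N σ₂ + q₁ * (grad N lam ⬝ᵥ σ₂ + k₂))
          + c ⬝ᵥ σ₂ : ℤ) : ℝ)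
      else 0 := by
  rw [show (fun i => q₂ * L * σ₁ i + q₁ * σ₂ i) = ((q₂ : ℤ) * L) • σ₁ + (q₁ : ℤ) • σ₂ from rfl,
    show (fun i => (q₁ : ℤ) * σ₂ i) = (q₁ : ℤ) • σ₂ from rfl]
  have hH : Hpoly N L lam (((q₂ : ℤ) * L) • σ₁ + (q₁ : ℤ) • σ₂) ≡ Hpoly N L lam ((q₁ : ℤ) • σ₂)
      [ZMOD L] :=
    Int.modEq_iff_dvd.2 ⟨-(q₂ * grad N lam ⬝ᵥ σ₁), by
      simp only [Hpoly_eq, dotProduct_add, dotProduct_smul, smul_eq_mul]; ring⟩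
  unfold sqTerm
  by_cases hH₂ : (L : ℤ) ∣ Hpoly N L lam ((q₁ : ℤ) • σ₂)
  · have hphase := phase_crt_modEq hNsym hNeven hq₁L hk₁ hk₂ a₁ a₂ (grad N lam) c σ₁ σ₂ _ rfl hH₂
    rw [show (q₁ : ℤ) * q₂ * L = (q₁ * q₂ * L : ℕ) by push_cast; ring] at hphase
    rw [if_pos (hH.dvd_iff.2 hH₂), if_pos hH₂, Hpoly_eq, eChar_intCast_eq_of_modEq hphase,
      Int.cast_add, eChar_add]
    congr 1
    · rw [← eChar_mul_mul hq₂L q₁]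
      congr 1 <;> push_cast <;> ring
    · rw [← eChar_mul_mul hq₁ (q₂ * L)]
      congr 1 <;> push_cast <;> ring
  · rw [if_neg (mt hH.dvd_iff.1 hH₂), if_neg hH₂]

end ExponentialSum

section Decomposition

variable {n : ℕ} {N : Matrix (Fin (n+1)) (Fin (n+1)) ℤ} {L : ℕ} {lam c : Fin (n+1) → ℤ}
  (hNsym : N.IsSymm) (hNeven : ∀ i, Even (N i i))
include hNsym hNeven

theorem Sq_eq_sum_crt {q₁ q₂ : ℕ} [NeZero q₁] [NeZero q₂] [NeZero L] (hq₁q₂ : q₁.Coprime q₂)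
    (hq₁L : q₁.Coprime L) :
    Sq n N (q₁ * q₂) L lam c
      = ∑ a₁ ∈ (range q₁).filter (fun a => a.gcd q₁ = 1),
          ∑ a₂ ∈ (range q₂).filter (fun a => a.gcd q₂ = 1),
            ∑ σ₁ : Fin (n+1) → Fin q₁, ∑ σ₂ : Fin (n+1) → Fin (q₂ * L),
              sqTerm N L (q₁ * q₂ * L) lam c ((q₂ * a₁ + q₁ * a₂ : ℕ) : ℤ)
                (fun i => ((q₂ * L * σ₁ i + q₁ * σ₂ i : ℕ) : ℤ)) :=
  calc Sq n N (q₁ * q₂) L lam c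
      = ∑ a ∈ (range (q₁ * q₂)).filter (fun a => a.gcd (q₁ * q₂) = 1),
          ∑ σ : Fin (n+1) → Fin (q₁ * q₂ * L),
            sqTerm N L (q₁ * q₂ * L) lam c a (fun i => (σ i : ℕ)) := by
        simp only [Sq, sqTerm, sum_filter]
        rfl
    _ = ∑ a ∈ (range (q₁ * q₂)).filter (fun a => a.gcd (q₁ * q₂) = 1),
          ∑ σ₁ : Fin (n+1) → Fin q₁, ∑ σ₂ : Fin (n+1) → Fin (q₂ * L),
            sqTerm N L (q₁ * q₂ * L) lam c a (fun i => ((q₂ * L * σ₁ i + q₁ * σ₂ i : ℕ) : ℤ)) := by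
        refine sum_congr rfl fun a _ => ?_
        rw [mul_assoc q₁ q₂ L]
        exact sum_fin_pi_mul_eq_sum_sum (hq₁q₂.mul_right hq₁L) _ fun x y h =>
          sqTerm_congr_right hNsym hNeven ⟨q₁ * q₂, by ring⟩ a fun i =>
            Int.natCast_modEq_iff.2 (h i)
    _ = _ :=
        sum_coprime_range_mul_eq_sum_sum hq₁q₂ _ fun x y h => sum_congr rfl fun _ _ =>
          sum_congr rfl fun _ _ => sqTerm_congr_left (q₁ * q₂) (Int.natCast_modEq_iff.2 h) _

theorem sum_crt_sqTerm_eq_S1_mul_S2 {q₁ q₂ : ℕ} (hq₁ : q₁ ≠ 0) (hq₂L : q₂ * L ≠ 0)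
    (hq₁L : IsCoprime (q₁ : ℤ) L) {k₁ k₂ : ℤ} (hk₁ : (q₁ : ℤ) ∣ Fint N lam / L - k₁ * q₂ * L)
    (hk₂ : ((q₂ : ℤ) * L) ∣ Fint N lam / L - k₂ * q₁) :
    ∑ a₁ ∈ (range q₁).filter (fun a => a.gcd q₁ = 1),
        ∑ a₂ ∈ (range q₂).filter (fun a => a.gcd q₂ = 1),
          ∑ σ₁ : Fin (n+1) → Fin q₁, ∑ σ₂ : Fin (n+1) → Fin (q₂ * L),
            sqTerm N L (q₁ * q₂ * L) lam c ((q₂ * a₁ + q₁ * a₂ : ℕ) : ℤ)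
              (fun i => ((q₂ * L * σ₁ i + q₁ * σ₂ i : ℕ) : ℤ))
      = S1 n N q₁ q₂ L k₁ lam c * S2 n N q₁ q₂ L k₂ lam c := by
  simp only [Nat.cast_add, Nat.cast_mul, sqTerm_crt hNsym hNeven hq₁ hq₂L hq₁L hk₁ hk₂]
  simp only [← mul_ite_zero, ← Finset.mul_sum, ← Finset.sum_mul]
  rw [S1, S2, sum_comm, sum_comm (s := (range q₂).filter _)]
  simp only [← ite_sum_zero, ← sum_filter]
  rfl

end Decomposition

theorem Sq_multiplicative_decomposition_general (n : ℕ)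
    (N : Matrix (Fin (n+1)) (Fin (n+1)) ℤ) (hNsym : N.IsSymm)
    (hNeven : ∀ i, Even (N i i))
    (L : ℕ) (hL : 0 < L)
    (lam : Fin (n+1) → ℤ)
    (q q₁ q₂ : ℕ) (hq₁ : 0 < q₁) (hq₂ : 0 < q₂) (hq : q = q₁ * q₂)
    (hcop : Int.gcd (q₁ : ℤ) (2 * L * N.det) = 1)
    (hbad : ∀ p : ℕ, p.Prime → p ∣ q₂ → (p : ℤ) ∣ 2 * L * N.det)
    (k₁ k₂ : ℤ)
    (hk₁ : (q₁ : ℤ) ∣ (Fint N lam / L - k₁ * q₂ * L))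
    (hk₂ : ((q₂ : ℤ) * L) ∣ (Fint N lam / L - k₂ * q₁)) :
    ∀ c : Fin (n+1) → ℤ,
      Sq n N q L lam c = S1 n N q₁ q₂ L k₁ lam c * S2 n N q₁ q₂ L k₂ lam c := by
  intro c
  subst hq
  have hq₁D : IsCoprime (q₁ : ℤ) (2 * L * N.det) := Int.isCoprime_iff_gcd_eq_one.2 hcop
  have hq₁L : IsCoprime (q₁ : ℤ) L := hq₁D.of_isCoprime_of_dvd_right ⟨2 * N.det, by ring⟩
  have : NeZero q₁ := ⟨hq₁.ne'⟩
  have : NeZero q₂ := ⟨hq₂.ne'⟩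
  have : NeZero L := ⟨hL.ne'⟩
  rw [Sq_eq_sum_crt hNsym hNeven (Nat.coprime_of_isCoprime_of_prime_dvd hq₁D hbad)
    (Nat.isCoprime_iff_coprime.1 hq₁L)]
  exact sum_crt_sqTerm_eq_S1_mul_S2 hNsym hNeven hq₁.ne' (NeZero.ne _) hq₁L hk₁ hk₂

/-- Lemma 4.2: multiplicative decomposition `S_{q,L,λ}(c) = S⁽¹⁾·S⁽²⁾` along
`q = q₁q₂` with `gcd(q₁, 2LD) = 1` and `q₂ ∣ (2LD)^∞`, where `D = det(2M_F)`. -/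
theorem Sq_multiplicative_decomposition (n : ℕ) (hn : 2 ≤ n)
    (N : Matrix (Fin (n+1)) (Fin (n+1)) ℤ) (hNsym : N.IsSymm)
    (hNeven : ∀ i, Even (N i i)) (hNdet : N.det ≠ 0)
    (L : ℕ) (hL : 0 < L)
    (lam : Fin (n+1) → ℤ) (hlam : (L : ℤ) ∣ Fint N lam)
    (q q₁ q₂ : ℕ) (hq₁ : 0 < q₁) (hq₂ : 0 < q₂) (hq : q = q₁ * q₂)
    (hcop : Int.gcd (q₁ : ℤ) (2 * L * N.det) = 1)
    (hbad : ∀ p : ℕ, p.Prime → p ∣ q₂ → (p : ℤ) ∣ 2 * L * N.det)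
    (k₁ k₂ : ℤ)
    (hk₁ : (q₁ : ℤ) ∣ (Fint N lam / L - k₁ * q₂ * L))
    (hk₂ : ((q₂ : ℤ) * L) ∣ (Fint N lam / L - k₂ * q₁)) :
    ∀ c : Fin (n+1) → ℤ,
      Sq n N q L lam c = S1 n N q₁ q₂ L k₁ lam c * S2 n N q₁ q₂ L k₂ lam c :=
  Sq_multiplicative_decomposition_general n N hNsym hNeven L hL lam q q₁ q₂ hq₁ hq₂ hq hcop hbad k₁
    k₂ hk₁ hk₂

end Quad
end
end

section
/- (Lattice-point upper bound valid in all ranges.) There is a constant C depending only on F, ξ, M and the a_j, b_j such that for all real B ≥ 1, R ≥ 1, all integers L ≥ 1 and all Γ ∈ ℤ^{n+1}: N_W((R,ξ),(L,Γ);B) ≤ C·( 1 + B^{n+1}/(L^{n+1}·Rⁿ) + Σ_{k=1}^{n} B^{k}/(L^{k}·R^{k−1}) ). -/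
open scoped BigOperators
open Finset Filter Topology Matrix

noncomputable section

/-!
In the coordinates `t = Mx`, a point of the cone in the `R`-zoom region of height `≤ B` has
`|t₀| ≤ B` and `|tⱼ| ≪ |t₀|/R` for `j ≥ 2`; the identity `t₀t₁ = -F₂(t₂, …, tₙ)` then gives
`|t₁| ≪ |t₀|/R² ≤ B/R`. So all counted points lie in a box of size `B × (B/R)ⁿ` in
`t`-coordinates. Cutting it into cubes of side `≍ L`, each cube meets the coset `Γ + Lℤⁿ⁺¹` in
at most one point, so the count is `≪ (1 + B/L)(1 + B/(LR))ⁿ`, which expands into the bound.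
-/

namespace Quad

theorem even_sum_mul_mul_of_isSymm {m : ℕ} {N : Matrix (Fin m) (Fin m) ℤ} (hsym : N.IsSymm)
    (heven : ∀ i, Even (N i i)) (x : Fin m → ℤ) : Even (∑ i, ∑ j, N i j * x i * x j) := by
  rw [← ZMod.intCast_eq_zero_iff_even]
  push_cast
  rw [← Finset.sum_product']
  -- mod 2 the terms at `(i, j)` and `(j, i)` cancel, and the diagonal terms vanish
  refine Finset.sum_ninvolution Prod.swap (fun p => ?_) (fun p hp hswap => hp ?_) (by simp)
    (fun _ => rfl)
  · rw [Prod.fst_swap, Prod.snd_swap, hsym.apply p.1 p.2]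
    ring_nf
    exact mul_eq_zero_of_right _ rfl
  · rw [← show p.1 = p.2 from congrArg Prod.snd hswap,
      ZMod.intCast_eq_zero_iff_even.mpr (heven _), zero_mul, zero_mul]

theorem FR_intCast {m : ℕ} {N : Matrix (Fin m) (Fin m) ℤ} (hsym : N.IsSymm)
    (heven : ∀ i, Even (N i i)) (x : Fin m → ℤ) : FR N (fun i => (x i : ℝ)) = Fint N x := by
  obtain ⟨k, hk⟩ := (even_sum_mul_mul_of_isSymm hsym heven x).two_dvd
  have hk' : ∑ i, ∑ j, (N i j : ℝ) * x i * x j = 2 * k := by exact_mod_cast hk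
  rw [FR, Fint, hk', hk, Int.mul_ediv_cancel_left _ two_ne_zero]
  ring

theorem abs_QFR_le {m : ℕ} (A : Matrix (Fin m) (Fin m) ℝ) {y : Fin m → ℝ} {q : ℝ}
    (hy : ∀ i, |y i| ≤ q) : |QFR A y| ≤ (∑ i, ∑ j, |A i j|) * q ^ 2 := by
  rw [QFR, Finset.sum_mul]
  refine (abs_sum_le_sum_abs _ _).trans (sum_le_sum fun i _ => ?_)
  rw [Finset.sum_mul]
  refine (abs_sum_le_sum_abs _ _).trans (sum_le_sum fun j _ => ?_)
  rw [abs_mul, abs_mul, mul_assoc, sq]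
  exact mul_le_mul_of_nonneg_left
    (mul_le_mul (hy i) (hy j) (abs_nonneg _) ((abs_nonneg _).trans (hy i))) (abs_nonneg _)

theorem abs_le_of_mul_div_mem_Icc {x y R α β : ℝ} (hR : 0 < R) (hx : x ≠ 0)
    (hα : α ≤ R * (y / x)) (hβ : R * (y / x) ≤ β) : |y| ≤ max |α| |β| / R * |x| := by
  calc |y| = |R * (y / x)| / R * |x| := by
        rw [abs_mul, abs_div, abs_of_pos hR]; field_simp
    _ ≤ max |α| |β| / R * |x| := by gcongr; exact abs_le_max_abs_abs hα hβ

theorem abs_one_le_of_mul_add_QFR_eq_zero {n : ℕ} (G : Matrix (Fin (n-1)) (Fin (n-1)) ℝ)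
    {t : Fin (n+1) → ℝ} (hW : t 0 * t 1 + QFR G (fun i => t (emb i)) = 0) (ht0 : t 0 ≠ 0)
    {q : ℝ} (hq : ∀ j : Fin (n+1), 2 ≤ j.val → |t j| ≤ q * |t 0|) :
    |t 1| ≤ (∑ i, ∑ j, |G i j|) * q ^ 2 * |t 0| := by
  refine le_of_mul_le_mul_left ?_ (abs_pos.2 ht0)
  calc |t 0| * |t 1| = |QFR G (fun i => t (emb i))| := by
        rw [← abs_mul, eq_neg_of_add_eq_zero_left hW, abs_neg]
    _ ≤ (∑ i, ∑ j, |G i j|) * (q * |t 0|) ^ 2 :=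
        abs_QFR_le G fun i => hq (emb i) (by simp [emb])
    _ = |t 0| * ((∑ i, ∑ j, |G i j|) * q ^ 2 * |t 0|) := by ring

theorem abs_le_of_zoom {n : ℕ} (G : Matrix (Fin (n-1)) (Fin (n-1)) ℝ) {a b : Fin (n+1) → ℝ}
    {c : ℝ} (hc : ∀ j, max |a j| |b j| ≤ c) {t : Fin (n+1) → ℝ} {B R : ℝ} (hR : 1 ≤ R)
    (hW : t 0 * t 1 + QFR G (fun i => t (emb i)) = 0) (ht0 : t 0 ≠ 0)
    (hzoom : ∀ j : Fin (n+1), 2 ≤ j.val → a j ≤ R * (t j / t 0) ∧ R * (t j / t 0) ≤ b j)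
    (hB : |t 0| ≤ B) {i : Fin (n+1)} (hi : i ≠ 0) :
    |t i| ≤ (c + (∑ i, ∑ j, |G i j|) * c ^ 2) * B / R := by
  have hR0 : 0 < R := by linarith
  have hc0 : 0 ≤ c := (abs_nonneg _).trans ((le_max_left _ _).trans (hc 0))
  have hcG : 0 ≤ ∑ i, ∑ j, |G i j| := by positivity
  have hhigh : ∀ j : Fin (n+1), 2 ≤ j.val → |t j| ≤ c / R * |t 0| := fun j hj =>
    (abs_le_of_mul_div_mem_Icc hR0 ht0 (hzoom j hj).1 (hzoom j hj).2).trans (by gcongr; exact hc j)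
  suffices |t i| ≤ (c + (∑ i, ∑ j, |G i j|) * c ^ 2) / R * |t 0| by
    calc |t i| ≤ _ := this
      _ ≤ (c + (∑ i, ∑ j, |G i j|) * c ^ 2) / R * B := by gcongr
      _ = _ := by ring
  have hi' : i.val ≠ 0 := fun h => hi (Fin.ext h)
  rcases (show i.val = 1 ∨ 2 ≤ i.val by omega) with h1 | h2
  · obtain rfl : i = 1 := Fin.ext (by rw [h1, Fin.val_one', Nat.mod_eq_of_lt (by omega)])
    calc |t 1| ≤ (∑ i, ∑ j, |G i j|) * (c / R) ^ 2 * |t 0| :=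
          abs_one_le_of_mul_add_QFR_eq_zero G hW ht0 hhigh
      _ = (∑ i, ∑ j, |G i j|) * c ^ 2 / R / R * |t 0| := by ring
      _ ≤ (∑ i, ∑ j, |G i j|) * c ^ 2 / R * |t 0| := by
          gcongr; exact div_le_self (by positivity) hR
      _ ≤ _ := by gcongr; linarith
  · calc |t i| ≤ c / R * |t 0| := hhigh i h2
      _ ≤ _ := by gcongr; nlinarith

theorem abs_mulVec_le {m : ℕ} (P : Matrix (Fin m) (Fin m) ℝ) {v : Fin m → ℝ} {ε : ℝ}
    (hv : ∀ j, |v j| ≤ ε) (i : Fin m) : |(P *ᵥ v) i| ≤ (∑ j, |P i j|) * ε := by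
  rw [mulVec, dotProduct, Finset.sum_mul]
  refine (abs_sum_le_sum_abs _ _).trans (sum_le_sum fun j _ => ?_)
  rw [abs_mul]
  exact mul_le_mul_of_nonneg_left (hv j) (abs_nonneg _)

theorem floor_div_mem_Icc {u s d : ℝ} (hd : 0 < d) (hu : |u| ≤ s) :
    ⌊u / d⌋ ∈ Icc (-⌈s / d⌉) ⌈s / d⌉ := by
  have hlo : -(s / d) ≤ u / d := by rw [← neg_div]; gcongr; exact neg_le_of_abs_le hu
  have hhi : u / d ≤ s / d := by gcongr; exact le_of_abs_le hu
  refine mem_Icc.2 ⟨Int.le_floor.2 ?_, (Int.floor_le_floor hhi).trans (Int.floor_le_ceil _)⟩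
  push_cast
  linarith [Int.le_ceil (s / d)]

theorem card_Icc_neg_ceil_le {r : ℝ} (hr : 0 ≤ r) : ((Icc (-⌈r⌉) ⌈r⌉).card : ℝ) ≤ 2 * r + 3 := by
  have hceil : 0 ≤ ⌈r⌉ := Int.ceil_nonneg hr
  rw [Int.card_Icc, show ⌈r⌉ + 1 - -⌈r⌉ = 2 * ⌈r⌉ + 1 by ring, ← Int.cast_natCast,
    Int.toNat_of_nonneg (by omega)]
  push_cast
  linarith [Int.ceil_lt_add_one r]

theorem eq_of_floor_mulVec_div_eq {m : ℕ} {P Q : Matrix (Fin m) (Fin m) ℝ} (hPQ : P * Q = 1)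
    {c : ℝ} (hc : 0 < c) (hP : ∀ i, ∑ j, |P i j| ≤ c) {L : ℕ} (hL : 0 < L) {x y : Fin m → ℤ}
    (hxy : ∀ i, (L : ℤ) ∣ x i - y i)
    (hfloor : ∀ i, ⌊(Q *ᵥ fun j => (x j : ℝ)) i / (L / (2 * c))⌋
      = ⌊(Q *ᵥ fun j => (y j : ℝ)) i / (L / (2 * c))⌋) : x = y := by
  have hd : (0 : ℝ) < L / (2 * c) := by positivity
  have hclose : ∀ k, |(Q *ᵥ fun j => ((x j - y j : ℤ) : ℝ)) k| ≤ L / (2 * c) := fun k => by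
    have := Int.abs_sub_lt_one_of_floor_eq_floor (hfloor k)
    rw [← sub_div, abs_div, abs_of_pos hd, div_lt_one hd] at this
    push_cast
    rw [show (fun j => (x j : ℝ) - y j) = (fun j => (x j : ℝ)) - fun j => (y j : ℝ) from rfl,
      mulVec_sub]
    exact this.le
  funext i
  refine sub_eq_zero.mp (Int.eq_zero_of_abs_lt_dvd (hxy i) ?_)
  suffices |((x i - y i : ℤ) : ℝ)| < L by exact_mod_cast this
  calc |((x i - y i : ℤ) : ℝ)| = |(P *ᵥ Q *ᵥ fun j => ((x j - y j : ℤ) : ℝ)) i| := by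
        rw [mulVec_mulVec, hPQ, one_mulVec]
    _ ≤ (∑ j, |P i j|) * (L / (2 * c)) := abs_mulVec_le P hclose i
    _ ≤ c * (L / (2 * c)) := by gcongr; exact hP i
    _ < L := by field_simp; norm_num

theorem natCard_le_prod_of_abs_mulVec_le {m : ℕ} {P Q : Matrix (Fin m) (Fin m) ℝ}
    (hPQ : P * Q = 1) {c : ℝ} (hc : 0 < c) (hP : ∀ i, ∑ j, |P i j| ≤ c) {L : ℕ} (hL : 0 < L)
    (Γ : Fin m → ℤ) {s : Fin m → ℝ} (hs : ∀ i, 0 ≤ s i) {p : (Fin m → ℤ) → Prop}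
    (hp : ∀ x, p x →
      (∀ i, (L : ℤ) ∣ x i - Γ i) ∧ ∀ i, |(Q *ᵥ fun j => (x j : ℝ)) i| ≤ s i) :
    (Nat.card {x // p x} : ℝ) ≤ ∏ i, (4 * c * s i / L + 3) := by
  set d : ℝ := L / (2 * c) with hd_def
  have hd : 0 < d := by positivity
  -- a cell of side `d` contains at most one point of the coset `Γ + Lℤᵐ`
  let cell : {x // p x} → ∀ i, Icc (-⌈s i / d⌉) ⌈s i / d⌉ := fun x i =>
    ⟨_, floor_div_mem_Icc hd ((hp x.1 x.2).2 i)⟩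
  have hcell : cell.Injective := fun x y hxy => Subtype.ext <|
    eq_of_floor_mulVec_div_eq hPQ hc hP hL
      (fun i => by simpa using dvd_sub ((hp x.1 x.2).1 i) ((hp y.1 y.2).1 i))
      (fun i => congrArg Subtype.val (congrFun hxy i))
  calc (Nat.card {x // p x} : ℝ) ≤ ∏ i, ((Icc (-⌈s i / d⌉) ⌈s i / d⌉).card : ℝ) := by
        exact_mod_cast (Nat.card_le_card_of_injective cell hcell).trans_eq (by simp)
    _ ≤ ∏ i, (2 * (s i / d) + 3) := prod_le_prod (fun _ _ => by positivity)
        fun i _ => card_Icc_neg_ceil_le (div_nonneg (hs i) hd.le)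
    _ = ∏ i, (4 * c * s i / L + 3) := by
        congr! 2 with i; rw [hd_def]; field_simp; ring

theorem mul_pow_le_of_le {K₁ K₂ K u v : ℝ} (n : ℕ) (hK₁ : K₁ ≤ K) (hK₂ : K₂ ≤ K) (hK₂0 : 0 ≤ K₂)
    (hK : 1 ≤ K) (hu : 0 ≤ u) (hv : 0 ≤ v) :
    (K₁ * u + 3) * (K₂ * v + 3) ^ n ≤ (6 * K) ^ (n + 1) * (1 + u + v ^ n + u * v ^ n) := by
  have hu' : K₁ * u + 3 ≤ 3 * K * (1 + u) := by nlinarith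
  have hv' : (K₂ * v + 3) ^ n ≤ (3 * K) ^ n * (2 ^ n * (1 + v ^ n)) := by
    calc (K₂ * v + 3) ^ n ≤ (3 * K * (1 + v)) ^ n := by gcongr; nlinarith
      _ ≤ (3 * K) ^ n * (2 ^ (n - 1) * (1 ^ n + v ^ n)) := by
          rw [mul_pow]; gcongr; exact add_pow_le zero_le_one hv n
      _ ≤ (3 * K) ^ n * (2 ^ n * (1 + v ^ n)) := by
          rw [one_pow]; gcongr; exacts [one_le_two, Nat.sub_le n 1]
  calc (K₁ * u + 3) * (K₂ * v + 3) ^ n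
      ≤ 3 * K * (1 + u) * ((3 * K) ^ n * (2 ^ n * (1 + v ^ n))) := by
        gcongr
    _ = (3 * K) ^ (n + 1) * 2 ^ n * ((1 + u) * (1 + v ^ n)) := by ring
    _ ≤ (3 * K) ^ (n + 1) * 2 ^ (n + 1) * ((1 + u) * (1 + v ^ n)) := by
        gcongr; exacts [one_le_two, Nat.le_succ n]
    _ = (6 * K) ^ (n + 1) * (1 + u + v ^ n + u * v ^ n) := by
        rw [show (6 * K) ^ (n + 1) = 2 ^ (n + 1) * (3 * K) ^ (n + 1) by rw [← mul_pow]; ring]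
        ring

theorem one_add_add_le_sum_Icc {B L R : ℝ} {n : ℕ} (hn : 2 ≤ n) (hB : 0 ≤ B) (hL : 0 < L)
    (hR : 1 ≤ R) :
    1 + B / L + (B / (L * R)) ^ n + B / L * (B / (L * R)) ^ n ≤
      1 + B ^ (n + 1) / (L ^ (n + 1) * R ^ n) + ∑ k ∈ Icc 1 n, B ^ k / (L ^ k * R ^ (k - 1)) := by
  have hR0 : 0 < R := by linarith
  have hmain : B / L * (B / (L * R)) ^ n = B ^ (n + 1) / (L ^ (n + 1) * R ^ n) := by
    rw [div_pow, div_mul_div_comm, mul_pow, ← pow_succ', ← mul_assoc, ← pow_succ']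
  have hlast : (B / (L * R)) ^ n ≤ B ^ n / (L ^ n * R ^ (n - 1)) := by
    rw [div_pow, mul_pow]; gcongr; omega
  have hpair : B ^ 1 / (L ^ 1 * R ^ (1 - 1)) + B ^ n / (L ^ n * R ^ (n - 1))
      ≤ ∑ k ∈ Icc 1 n, B ^ k / (L ^ k * R ^ (k - 1)) := by
    refine (sum_pair (f := fun k => B ^ k / (L ^ k * R ^ (k - 1))) (show 1 ≠ n by omega)).symm.le
      |>.trans (sum_le_sum_of_subset_of_nonneg ?_ fun k _ _ => by positivity)
    simp only [insert_subset_iff, singleton_subset_iff, mem_Icc]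
    omega
  simp only [pow_one, Nat.sub_self, pow_zero, mul_one] at hpair
  linarith

theorem tmap_zero_mul_tmap_one_add_QFR_eq_zero {n : ℕ} {N : Matrix (Fin (n+1)) (Fin (n+1)) ℤ}
    (hNsym : N.IsSymm) (hNeven : ∀ i, Even (N i i)) {M : Matrix (Fin (n+1)) (Fin (n+1)) ℝ}
    (hM : IsUnit M) {G : Matrix (Fin (n-1)) (Fin (n-1)) ℝ}
    (hWitt : ∀ t : Fin (n+1) → ℝ,
      FR N (M⁻¹.mulVec t) = t 0 * t 1 + QFR G (fun i => t (emb i)))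
    {x : Fin (n+1) → ℤ} (hF : Fint N x = 0) :
    tmap n M x 0 * tmap n M x 1 + QFR G (fun i => tmap n M x (emb i)) = 0 := by
  rw [← hWitt, tmap, mulVec_mulVec, nonsing_inv_mul _ ((isUnit_iff_isUnit_det M).mp hM),
    one_mulVec, FR_intCast hNsym hNeven, hF, Int.cast_zero]

theorem NW_lattice_upper_bound_general (n : ℕ) (hn : 2 ≤ n)
    (N : Matrix (Fin (n+1)) (Fin (n+1)) ℤ) (hNsym : N.IsSymm)
    (hNeven : ∀ i, Even (N i i))
    (M : Matrix (Fin (n+1)) (Fin (n+1)) ℝ) (hM : IsUnit M)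
    (G : Matrix (Fin (n-1)) (Fin (n-1)) ℝ)
    (hWitt : ∀ t : Fin (n+1) → ℝ,
      FR N (M⁻¹.mulVec t) = t 0 * t 1 + QFR G (fun i => t (emb i)))
    (a b : Fin (n+1) → ℝ) :
    ∃ C : ℝ, 0 < C ∧
      ∀ (B R : ℝ), 1 ≤ B → 1 ≤ R → ∀ (L : ℕ), 1 ≤ L → ∀ Γ : Fin (n+1) → ℤ,
        (NW n N M a b B R L Γ : ℝ)
          ≤ C * (1 + B^(n+1) / ((L : ℝ)^(n+1) * R^n)
              + ∑ k ∈ Finset.Icc 1 n, B^k / ((L : ℝ)^k * R^(k-1))) := by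
  obtain ⟨c, hc⟩ := Finite.exists_le fun j => max |a j| |b j|
  have hc0 : 0 ≤ c := (abs_nonneg _).trans ((le_max_left _ _).trans (hc 0))
  set K₀ := c + (∑ i, ∑ j, |G i j|) * c ^ 2
  have hK₀ : 0 ≤ K₀ := by positivity
  obtain ⟨κ, hκ1, hκ⟩ : ∃ κ : ℝ, 1 ≤ κ ∧ ∀ i, ∑ j, |M⁻¹ i j| ≤ κ := by
    obtain ⟨κ, hκ⟩ := Finite.exists_le fun i => ∑ j, |M⁻¹ i j|
    exact ⟨max κ 1, le_max_right _ _, fun i => (hκ i).trans (le_max_left _ _)⟩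
  refine ⟨(6 * (4 * κ * (1 + K₀))) ^ (n + 1), by positivity, fun B R hB hR L hL Γ => ?_⟩
  calc (NW n N M a b B R L Γ : ℝ)
      ≤ ∏ i : Fin (n+1), (4 * κ * (if i = 0 then B else K₀ * B / R) / L + 3) := by
        refine natCard_le_prod_of_abs_mulVec_le
          (nonsing_inv_mul _ ((isUnit_iff_isUnit_det M).mp hM)) (by positivity) hκ hL Γ
          (fun i => by split_ifs <;> positivity) ?_
        rintro x ⟨-, hF, hΓ, ht0, hzoom, htB⟩
        refine ⟨hΓ, fun i => ?_⟩
        split_ifs with hi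
        · exact hi ▸ htB 0
        · exact abs_le_of_zoom G hc hR
            (tmap_zero_mul_tmap_one_add_QFR_eq_zero hNsym hNeven hM hWitt hF) ht0 hzoom (htB 0) hi
    _ = (4 * κ * (B / L) + 3) * (4 * κ * K₀ * (B / (L * R)) + 3) ^ n := by
        simp only [Fin.prod_univ_succ, if_pos, Fin.succ_ne_zero, if_false, prod_const, card_univ,
          Fintype.card_fin]
        ring
    _ ≤ (6 * (4 * κ * (1 + K₀))) ^ (n + 1)
          * (1 + B / L + (B / (L * R)) ^ n + B / L * (B / (L * R)) ^ n) :=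
        mul_pow_le_of_le n (le_mul_of_one_le_right (by positivity) (by linarith))
          (by gcongr; linarith) (by positivity) (by nlinarith) (by positivity) (by positivity)
    _ ≤ _ := by
        gcongr _ * ?_
        exact one_add_add_le_sum_Icc hn (by linarith) (Nat.cast_pos.mpr hL) hR

/-- Lemma 7.3 (lattice-point upper bound valid in all ranges):
`N_W((R,ξ),(L,Γ);B) ≪ 1 + B^{n+1}/(L^{n+1}Rⁿ) + Σ_{k=1}^n B^k/(L^k R^{k−1})`. -/
theorem NW_lattice_upper_bound (n : ℕ) (hn : 2 ≤ n)
    (N : Matrix (Fin (n+1)) (Fin (n+1)) ℤ) (hNsym : N.IsSymm)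
    (hNeven : ∀ i, Even (N i i)) (hNdet : N.det ≠ 0)
    (ξ : Fin (n+1) → ℝ) (hξ : ξ ≠ 0) (hFξ : FR N ξ = 0)
    (M : Matrix (Fin (n+1)) (Fin (n+1)) ℝ) (hM : IsUnit M)
    (hMξ : M.mulVec ξ = fun i => if i = 0 then 1 else 0)
    (G : Matrix (Fin (n-1)) (Fin (n-1)) ℝ) (hGsym : G.IsSymm) (hGdet : G.det ≠ 0)
    (hWitt : ∀ t : Fin (n+1) → ℝ,
      FR N (M⁻¹.mulVec t) = t 0 * t 1 + QFR G (fun i => t (emb i)))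
    (a b : Fin (n+1) → ℝ) (hab : ∀ j : Fin (n+1), 2 ≤ j.val → a j < b j) :
    ∃ C : ℝ, 0 < C ∧
      ∀ (B R : ℝ), 1 ≤ B → 1 ≤ R → ∀ (L : ℕ), 1 ≤ L → ∀ Γ : Fin (n+1) → ℤ,
        (NW n N M a b B R L Γ : ℝ)
          ≤ C * (1 + B^(n+1) / ((L : ℝ)^(n+1) * R^n)
              + ∑ k ∈ Finset.Icc 1 n, B^k / ((L : ℝ)^k * R^(k-1))) :=
  NW_lattice_upper_bound_general n hn N hNsym hNeven M hM G hWitt a b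

end Quad
end
end

section
/- (Repulsion inequality at the real place; the approximation constant of a rational point on a quadric is at least 2.) Let n ≥ 2 and let F(x₀,…,x_n) = x₀x₁ + F₂(x₂,…,x_n), where F₂ is a quadratic form with integer coefficients in the n−1 variables x₂,…,x_n. Then there exists a constant A > 0, depending only on F₂, such that for every x = (x₀,…,x_n) ∈ ℤ^{n+1} with gcd(x₀,…,x_n) = 1, F(x) = 0, x₀ ≠ 0 and x₁ ≠ 0: ( max_{1≤i≤n} |x_i|/|x₀| )² · max_{0≤i≤n} |x_i| ≥ A. -/
open scoped BigOperators
open Finset Filter Topology Matrix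

noncomputable section

/-!
Since `x₁ ≠ 0`, the equation gives `|x₀| ≤ |x₀x₁| = |F₂(x₂,…,x_n)| ≤ C·m²`, where `m = max_{i≥1}|x_i|`
and `C` is the sum of the absolute values of the coefficients of `F₂`. With `|x₀| ≤ H` this yields
`(m/|x₀|)²·H ≥ m²/|x₀| ≥ 1/(C+1)`.
-/

namespace Quad

theorem abs_quadratic_le {ι R : Type*} [Fintype ι] [CommRing R] [LinearOrder R]
    [IsStrictOrderedRing R] (A : Matrix ι ι R) {y : ι → R} {M : R} (hy : ∀ i, |y i| ≤ M) :
    |∑ i, ∑ j, A i j * y i * y j| ≤ (∑ i, ∑ j, |A i j|) * M ^ 2 := by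
  calc |∑ i, ∑ j, A i j * y i * y j|
      ≤ ∑ i, ∑ j, |A i j * y i * y j| :=
        (abs_sum_le_sum_abs _ _).trans (sum_le_sum fun i _ => abs_sum_le_sum_abs _ _)
    _ ≤ ∑ i, ∑ j, |A i j| * M ^ 2 := by
        refine sum_le_sum fun i _ => sum_le_sum fun j _ => ?_
        rw [abs_mul, abs_mul, mul_assoc, sq]
        have hM : 0 ≤ M := (abs_nonneg _).trans (hy i)
        exact mul_le_mul_of_nonneg_left (mul_le_mul (hy i) (hy j) (abs_nonneg _) hM) (abs_nonneg _)
    _ = (∑ i, ∑ j, |A i j|) * M ^ 2 := by simp only [sum_mul]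

theorem abs_le_sup_natAbs {ι : Type*} {s : Finset ι} (x : ι → ℤ) {i : ι} (hi : i ∈ s) :
    |x i| ≤ (s.sup fun i => (x i).natAbs : ℕ) := by
  rw [Int.abs_eq_natAbs]
  exact_mod_cast le_sup (f := fun i => (x i).natAbs) hi

theorem one_div_le_div_sq_mul {K a m H : ℝ} (hK : 0 < K) (ha : 0 < a) (hm : a ≤ K * m ^ 2)
    (hH : a ≤ H) : 1 / K ≤ (m / a) ^ 2 * H :=
  calc 1 / K ≤ m ^ 2 / a := by rw [div_le_div_iff₀ hK ha]; linarith
    _ = (m / a) ^ 2 * a := by field_simp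
    _ ≤ (m / a) ^ 2 * H := by gcongr

theorem repulsion_real_general (n : ℕ)
    (A : Matrix (Fin (n-1)) (Fin (n-1)) ℤ) :
    ∃ Acst : ℝ, 0 < Acst ∧
      ∀ x : Fin (n+1) → ℤ,
        Finset.univ.gcd x = 1 →
        x 0 * x 1 + (∑ i, ∑ j, A i j * x (emb i) * x (emb j)) = 0 →
        x 0 ≠ 0 → x 1 ≠ 0 →
        Acst ≤
          ((((Finset.univ.filter (fun i : Fin (n+1) => 1 ≤ i.val)).sup
              (fun i => (x i).natAbs) : ℕ) : ℝ) / |(x 0 : ℝ)|)^2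
            * ((Finset.univ.sup (fun i => (x i).natAbs) : ℕ) : ℝ) := by
  set C : ℤ := ∑ i, ∑ j, |A i j|
  refine ⟨1 / ((C : ℝ) + 1), by positivity, fun x _ hF hx0 hx1 => ?_⟩
  set m := (univ.filter fun i : Fin (n+1) => 1 ≤ i.val).sup fun i => (x i).natAbs
  have hx0_le : |x 0| ≤ C * (m : ℤ) ^ 2 :=
    calc |x 0| ≤ |x 0 * x 1| := by
          rw [abs_mul]; exact le_mul_of_one_le_right (abs_nonneg _) (Int.one_le_abs hx1)
      _ = |∑ i, ∑ j, A i j * x (emb i) * x (emb j)| := by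
          rw [eq_neg_of_add_eq_zero_left hF, abs_neg]
      _ ≤ C * (m : ℤ) ^ 2 :=
          abs_quadratic_le A fun i => abs_le_sup_natAbs x (by simp [emb])
  have hx0_le' : |(x 0 : ℝ)| ≤ ((C : ℝ) + 1) * (m : ℝ) ^ 2 := by
    have h : ((|x 0| : ℤ) : ℝ) ≤ C * (m : ℝ) ^ 2 := by exact_mod_cast hx0_le
    rw [← Int.cast_abs]
    nlinarith [sq_nonneg (m : ℝ)]
  refine one_div_le_div_sq_mul (by positivity) (by positivity) hx0_le' ?_
  rw [← Int.cast_abs]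
  exact_mod_cast abs_le_sup_natAbs x (mem_univ 0)

/-- Repulsion inequality at the real place: for `F = x₀x₁ + F₂(x₂,…,x_n)` there is
`A > 0` with `(max_{1≤i≤n}|x_i|/|x₀|)² · max_{0≤i≤n}|x_i| ≥ A` for every primitive
integer zero of `F` with `x₀, x₁ ≠ 0`. -/
theorem repulsion_real (n : ℕ) (hn : 2 ≤ n)
    (A : Matrix (Fin (n-1)) (Fin (n-1)) ℤ) :
    ∃ Acst : ℝ, 0 < Acst ∧
      ∀ x : Fin (n+1) → ℤ,
        Finset.univ.gcd x = 1 →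
        x 0 * x 1 + (∑ i, ∑ j, A i j * x (emb i) * x (emb j)) = 0 →
        x 0 ≠ 0 → x 1 ≠ 0 →
        Acst ≤
          ((((Finset.univ.filter (fun i : Fin (n+1) => 1 ≤ i.val)).sup
              (fun i => (x i).natAbs) : ℕ) : ℝ) / |(x 0 : ℝ)|)^2
            * ((Finset.univ.sup (fun i => (x i).natAbs) : ℕ) : ℝ) :=
  repulsion_real_general n A

end Quad
end
end

section
/- (Repulsion inequality at a non-archimedean place.) Let n ≥ 2 and let F(x₀,…,x_n) = x₀x₁ + F₂(x₂,…,x_n), where F₂ is a quadratic form with integer coefficients in the n−1 variables x₂,…,x_n. Then for every prime p and every x = (x₀,…,x_n) ∈ ℤ^{n+1} with gcd(x₀,…,x_n) = 1, F(x) = 0, x₀ ≠ 0 and x₁ ≠ 0: ( max_{1≤i≤n} |x_i/x₀|_p )² · max_{0≤i≤n} |x_i| ≥ 1, where |·|_p denotes the p-adic absolute value on ℚ and |x_i| the usual archimedean absolute value. -/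
/-! Let `m` be the maximum of `|x_i/x₀|_p` over `i ≥ 1`, so `|x_i|_p ≤ m |x₀|_p` for those `i`.
Since `F₂` has integer coefficients, the ultrametric inequality gives
`|x₀|_p |x₁|_p = |F₂(x₂,…,x_n)|_p ≤ m² |x₀|_p²`, hence `|x₁|_p ≤ m² |x₀|_p ≤ m²`. As `x₁` is a
nonzero integer divisible by `p^{v_p(x₁)}`, `|x₁| · |x₁|_p ≥ 1`, and so `m² · max |x_i| ≥ 1`. -/

open scoped BigOperators
open Finset Filter Topology Matrix

noncomputable section

namespace Quad

section

variable {p : ℕ}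

theorem padicNorm_intCast_pos [Fact p.Prime] {z : ℤ} (hz : z ≠ 0) : 0 < padicNorm p z :=
  (padicNorm.nonneg _).lt_of_ne' (padicNorm.nonzero (Int.cast_ne_zero.mpr hz))

theorem one_le_natAbs_mul_padicNorm {z : ℤ} (hz : z ≠ 0) :
    1 ≤ (z.natAbs : ℚ) * padicNorm p z := by
  have hdvd : p ^ padicValNat p z.natAbs ∣ z.natAbs := pow_padicValNat_dvd
  have hpos : 0 < p ^ padicValNat p z.natAbs :=
    Nat.pos_of_dvd_of_pos hdvd (Int.natAbs_pos.mpr hz)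
  rw [padicNorm.eq_zpow_of_nonzero (Int.cast_ne_zero.mpr hz), padicValRat.of_int, padicValInt,
    _root_.zpow_neg, zpow_natCast, ← div_eq_mul_inv, one_le_div (by exact_mod_cast hpos)]
  exact_mod_cast Nat.le_of_dvd (Int.natAbs_pos.mpr hz) hdvd

theorem padicNorm_quadForm_le [Fact p.Prime] {ι : Type*} [Fintype ι] (A : Matrix ι ι ℤ)
    {y : ι → ℤ} {c : ℚ} (hy : ∀ i, padicNorm p (y i) ≤ c) :
    padicNorm p ((∑ i, ∑ j, A i j * y i * y j : ℤ) : ℚ) ≤ c ^ 2 := by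
  push_cast
  refine padicNorm.sum_le' (fun i _ => padicNorm.sum_le' (fun j _ => ?_) (sq_nonneg c))
    (sq_nonneg c)
  have hc : 0 ≤ c := (padicNorm.nonneg _).trans (hy i)
  rw [padicNorm.mul, padicNorm.mul, sq, ← one_mul (c * c), ← mul_assoc]
  exact mul_le_mul (mul_le_mul (padicNorm.of_int _) (hy i) (padicNorm.nonneg _) zero_le_one)
    (hy j) (padicNorm.nonneg _) (by positivity)

theorem padicNorm_le_sq_of_mul_add_quadForm_eq_zero [Fact p.Prime] {ι : Type*} [Fintype ι]
    (A : Matrix ι ι ℤ) {a b : ℤ} {y : ι → ℤ} {c : ℚ} (ha : a ≠ 0)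
    (hy : ∀ i, padicNorm p (y i) ≤ c * padicNorm p a)
    (h : a * b + ∑ i, ∑ j, A i j * y i * y j = 0) :
    padicNorm p b ≤ c ^ 2 := by
  have hab : padicNorm p a * padicNorm p b ≤ padicNorm p a * (c ^ 2 * padicNorm p a) := by
    rw [← padicNorm.mul, ← Int.cast_mul, eq_neg_of_add_eq_zero_left h, Int.cast_neg,
      padicNorm.neg]
    calc _ ≤ (c * padicNorm p a) ^ 2 := padicNorm_quadForm_le A hy
      _ = _ := by ring
  calc padicNorm p b ≤ c ^ 2 * padicNorm p a :=
        le_of_mul_le_mul_left hab (padicNorm_intCast_pos ha)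
    _ ≤ c ^ 2 * 1 := by gcongr; exact padicNorm.of_int a
    _ = c ^ 2 := mul_one _

end

/-- Repulsion inequality at a non-archimedean place: for `F = x₀x₁ + F₂(x₂,…,x_n)`,
every prime `p` and every primitive integer zero of `F` with `x₀, x₁ ≠ 0` satisfies
`(max_{1≤i≤n}|x_i/x₀|_p)² · max_{0≤i≤n}|x_i| ≥ 1`. -/
theorem repulsion_padic (n : ℕ) (hn : 2 ≤ n)
    (A : Matrix (Fin (n-1)) (Fin (n-1)) ℤ)
    (p : ℕ) (hp : p.Prime) :
    ∀ x : Fin (n+1) → ℤ,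
      Finset.univ.gcd x = 1 →
      x 0 * x 1 + (∑ i, ∑ j, A i j * x (emb i) * x (emb j)) = 0 →
      x 0 ≠ 0 → x 1 ≠ 0 →
      (1 : ℚ) ≤
        ((Finset.univ.filter (fun i : Fin (n+1) => 1 ≤ i.val)).sup'
            (⟨⟨1, by omega⟩, by simp⟩ :
              ((Finset.univ.filter (fun i : Fin (n+1) => 1 ≤ i.val))).Nonempty)
            (fun i => padicNorm p ((x i : ℚ) / (x 0 : ℚ))))^2
          * ((Finset.univ.sup (fun i => (x i).natAbs) : ℕ) : ℚ) := by
  intro x _ hF hx0 hx1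
  have : Fact p.Prime := ⟨hp⟩
  set m := (Finset.univ.filter (fun i : Fin (n+1) => 1 ≤ i.val)).sup' _
    (fun i => padicNorm p ((x i : ℚ) / (x 0 : ℚ)))
  have hy : ∀ j, padicNorm p (x (emb j)) ≤ m * padicNorm p (x 0) := fun j => by
    rw [← div_le_iff₀ (padicNorm_intCast_pos hx0), ← padicNorm.div]
    exact Finset.le_sup' (fun i => padicNorm p ((x i : ℚ) / (x 0 : ℚ)))
      (by simp [emb])
  have hx1m : padicNorm p (x 1) ≤ m ^ 2 :=
    padicNorm_le_sq_of_mul_add_quadForm_eq_zero A hx0 hy hF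
  have hx1H : (x 1).natAbs ≤ Finset.univ.sup (fun i => (x i).natAbs) :=
    Finset.le_sup (f := fun i => (x i).natAbs) (Finset.mem_univ 1)
  calc (1 : ℚ) ≤ (x 1).natAbs * padicNorm p (x 1) := one_le_natAbs_mul_padicNorm hx1
    _ ≤ _ := by rw [mul_comm]; gcongr

end Quad
end
end
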